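/- Composing two noncrossing perfect matchings of bottom/top points (stacking diagrams) yields a noncrossing perfect matching: the path-following composition of two planar diagrams on N strands is again a planar diagram on N strands. -/

import Mathlib

/-!
The points of the stack carry two involutions: `stackMatch`, following a chord of either diagram,
and `glue`, crossing the interface, whose fixed points are the outer points. A strand is an orbit
of the group they generate. The orbit of a fixed point `x` of `glue` is the orbit of `x` under the
rotation `ρ = glue ∘ stackMatch`, on which `glue` acts by `ρ^j x ↦ ρ^(-j) x`; so its fixed points
there are the `ρ^j x` with `2j` divisible by the period `n`. As `stackMatch` has no fixed point, `n`
does not divide any odd number, hence is even, and the orbit contains exactly one fixed point of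
`glue` besides `x`, namely `ρ^(n/2) x`. So stacking matches every outer point with exactly one
other.

Noncrossing is a discrete Jordan curve argument. Fix the strand `P` from `a` to `b` and give each
point off `P` the parity of the number of chords of `P` in its layer separating it from the left
edge of that layer. Following a chord of a noncrossing matching preserves this parity, since the
chords of `P` nested under it are matched among themselves; crossing the interface preserves it
too. An outer point between `a` and `b` has parity `1`, one outside has parity `0`, so no strand
joins them.
-/

/-- The circular position of a point of a planar diagram on `N` strands: the `2*N`
boundary points consist of `N` bottom points (indices `0,…,N-1`, left to right) and
`N` top points (indices `N,…,2*N-1`, left to right); going around the boundary of the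
rectangle one meets the bottom points left to right and then the top points right to
left. -/
def diagPos (N : ℕ) (a : Fin (2*N)) : ℕ :=
  if (a : ℕ) < N then (a : ℕ) else 3*N - 1 - (a : ℕ)

/-- A planar diagram on `N` strands (without closed loops): a noncrossing perfect
matching of the `N` bottom and `N` top boundary points, i.e. a fixed-point-free
involution of the `2*N` boundary points whose chords do not cross in the disk
(no `a, b, c, d` with circular positions `pos a < pos c < pos b < pos d` and
`a` matched to `b`, `c` matched to `d`). -/
def IsDiagram (N : ℕ) (m : Fin (2*N) → Fin (2*N)) : Prop :=
  (∀ a, m a ≠ a) ∧ (∀ a, m (m a) = a) ∧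
  ∀ a b c d : Fin (2*N),
    diagPos N a < diagPos N c → diagPos N c < diagPos N b → diagPos N b < diagPos N d →
    m a = b → m c = d → False

/-- One step along a strand in the two-layer stack of diagrams `m1` (bottom layer) and
`m2` (top layer): follow an edge of `m1`, follow an edge of `m2`, or cross the glued
middle interface (top point `N + j` of the bottom layer is glued to bottom point `j`
of the top layer). -/
def layerStep (N : ℕ) (m1 m2 : Fin (2*N) → Fin (2*N)) :
    (Fin (2*N) ⊕ Fin (2*N)) → (Fin (2*N) ⊕ Fin (2*N)) → Prop
  | .inl p, .inl q => m1 p = q ∨ m1 q = p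
  | .inr p, .inr q => m2 p = q ∨ m2 q = p
  | .inl p, .inr q => (p : ℕ) = (q : ℕ) + N
  | .inr p, .inl q => (q : ℕ) = (p : ℕ) + N

/-- Two points of the two-layer stack are connected if some path of strand segments
joins them. -/
def Conn (N : ℕ) (m1 m2 : Fin (2*N) → Fin (2*N))
    (x y : Fin (2*N) ⊕ Fin (2*N)) : Prop :=
  Relation.ReflTransGen (layerStep N m1 m2) x y

/-- The outer boundary point of the stacked diagram corresponding to `a`: bottom
points live on the bottom layer, top points on the top layer. -/
def outer (N : ℕ) (a : Fin (2*N)) : Fin (2*N) ⊕ Fin (2*N) :=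
  if (a : ℕ) < N then Sum.inl a else Sum.inr a

/-- Composition (vertical stacking) of planar diagrams: the composite matches `a`
to the (unique, for genuine diagrams) other outer point connected to it by a path
through the stack. -/
noncomputable def diagComp (N : ℕ) (m1 m2 : Fin (2*N) → Fin (2*N)) :
    Fin (2*N) → Fin (2*N) :=
  open scoped Classical in
  fun a => if h : ∃ b, b ≠ a ∧ Conn N m1 m2 (outer N a) (outer N b) then h.choose else a

/-- The identity diagram: `N` through-strands, matching bottom point `i` with top
point `N + i`. -/
def idDiag (N : ℕ) (a : Fin (2*N)) : Fin (2*N) :=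
  if h : (a : ℕ) < N then ⟨(a : ℕ) + N, by omega⟩
  else ⟨(a : ℕ) - N, by have := a.isLt; omega⟩

/-- A point of the stack lying on a closed loop: it is connected to no outer
boundary point. -/
def IsLoopPoint (N : ℕ) (m1 m2 : Fin (2*N) → Fin (2*N))
    (x : Fin (2*N) ⊕ Fin (2*N)) : Prop :=
  ∀ a : Fin (2*N), ¬ Conn N m1 m2 x (outer N a)

/-- The number of closed loops produced when stacking `m2` on top of `m1`: the number
of connected components of loop points. -/
noncomputable def numLoops (N : ℕ) (m1 m2 : Fin (2*N) → Fin (2*N)) : ℕ :=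
  Nat.card (Quot (fun x y : {x // IsLoopPoint N m1 m2 x} => Conn N m1 m2 x.1 y.1))

/-- The `i`-th Temperley–Lieb generator diagram (`1 ≤ i ≤ N-1`), as a function on
indices: it pairs bottom points `i-1, i` together (0-indexed: the `i`-th and
`(i+1)`-st bottom points), pairs top points `N+i-1, N+i` together, and pairs bottom
`j` with top `N+j` otherwise. -/
def genDiagNat (N i a : ℕ) : ℕ :=
  if a = i - 1 then i
  else if a = i then i - 1
  else if a = N + i - 1 then N + i
  else if a = N + i then N + i - 1
  else if a < N then a + N else a - N

/-- The `i`-th Temperley–Lieb generator diagram on `N` strands. -/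
def genDiag (N i : ℕ) (a : Fin (2*N)) : Fin (2*N) :=
  ⟨genDiagNat N i (a : ℕ) % (2*N), Nat.mod_lt _ a.pos⟩

open Function Relation Finset

theorem Finset.even_card_of_involution {α : Type*} {s : Finset α} (g : α → α)
    (hg : ∀ a ∈ s, g a ∈ s) (hfree : ∀ a ∈ s, g a ≠ a) (hinv : ∀ a ∈ s, g (g a) = a) :
    Even #s := by
  have hsum : ∑ _a ∈ s, (1 : ZMod 2) = 0 :=
    sum_involution (fun a _ => g a) (fun _ _ => by decide) (fun a ha _ => hfree a ha) hg hinv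
  simpa [ZMod.natCast_eq_zero_iff_even] using hsum

theorem Finset.card_filter_eq_ite_add_ite {α : Type*} [DecidableEq α] {s : Finset α}
    {f : α → Prop} [DecidablePred f] {a b : α} (hab : a ≠ b)
    (hs : ∀ x, f x → (x ∈ s ↔ x = a ∨ x = b)) :
    #{x ∈ s | f x} = (if f a then 1 else 0) + (if f b then 1 else 0) := by
  have : s.filter f = ({a, b} : Finset α).filter f := by
    ext x
    simp only [mem_filter, mem_insert, mem_singleton]
    exact ⟨fun ⟨hx, hf⟩ => ⟨(hs x hf).1 hx, hf⟩, fun ⟨hx, hf⟩ => ⟨(hs x hf).2 hx, hf⟩⟩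
  rw [this, card_filter, sum_pair hab]

namespace Function.Involutive

variable {α : Type*} {σ τ : α → α}

/-- The rotation of the dihedral group generated by two involutions. -/
def rot (hσ : Involutive σ) (hτ : Involutive τ) : Equiv.Perm α :=
  hτ.toPerm τ * hσ.toPerm σ

variable (hσ : Involutive σ) (hτ : Involutive τ) {x : α}

lemma rot_zpow_succ_apply (j : ℤ) (z : α) :
    (rot hσ hτ ^ (j + 1)) z = τ (σ ((rot hσ hτ ^ j) z)) := by
  rw [add_comm, zpow_one_add]; rfl

lemma rot_zpow_pred_apply (j : ℤ) (z : α) :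
    (rot hσ hτ ^ (j - 1)) z = σ (τ ((rot hσ hτ ^ j) z)) := by
  rw [sub_eq_neg_add, zpow_add, zpow_neg_one, Equiv.Perm.mul_apply, Equiv.Perm.inv_def,
    Equiv.symm_apply_eq]
  simp [rot, hσ _, hτ _]

lemma rot_zpow_apply_eq_iff (i j : ℤ) :
    (rot hσ hτ ^ i) x = (rot hσ hτ ^ j) x ↔ (MulAction.period (rot hσ hτ) x : ℤ) ∣ i - j := by
  rw [← MulAction.zpow_smul_eq_iff_period_dvd, Equiv.Perm.smul_def,
    ← (rot hσ hτ ^ (-j)).injective.eq_iff, ← Equiv.Perm.mul_apply, ← Equiv.Perm.mul_apply,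
    ← zpow_add, ← zpow_add]
  simp [sub_eq_neg_add]

lemma apply_rot_zpow_of_fixed (hx : τ x = x) (j : ℤ) :
    τ ((rot hσ hτ ^ j) x) = (rot hσ hτ ^ (-j)) x := by
  have hconj : SemiconjBy (hτ.toPerm τ) (rot hσ hτ) (rot hσ hτ)⁻¹ := by
    ext z; simp [rot, hτ _]
  simpa [zpow_neg, hx] using congrArg (· x) (hconj.zpow_right j).eq

lemma apply_rot_zpow_of_fixed' (hx : τ x = x) (j : ℤ) :
    σ ((rot hσ hτ ^ j) x) = (rot hσ hτ ^ (-j - 1)) x := by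
  rw [← hτ (σ ((rot hσ hτ ^ j) x)), ← rot_zpow_succ_apply hσ hτ,
    apply_rot_zpow_of_fixed hσ hτ hx]
  ring_nf

lemma reflTransGen_iff_exists_rot_zpow (hx : τ x = x) {y : α} :
    ReflTransGen (fun a b => b = σ a ∨ b = τ a) x y ↔ ∃ j : ℤ, (rot hσ hτ ^ j) x = y := by
  constructor
  · intro h
    induction h with
    | refl => exact ⟨0, rfl⟩
    | tail _ hstep ih =>
      obtain ⟨j, rfl⟩ := ih
      rcases hstep with rfl | rfl
      · exact ⟨_, (apply_rot_zpow_of_fixed' hσ hτ hx j).symm⟩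
      · exact ⟨_, (apply_rot_zpow_of_fixed hσ hτ hx j).symm⟩
  · rintro ⟨j, rfl⟩
    induction j using Int.induction_on with
    | zero => exact .refl
    | succ i ih => exact (ih.tail (Or.inl rfl)).tail (Or.inr (rot_zpow_succ_apply ..))
    | pred i ih => exact (ih.tail (Or.inr rfl)).tail (Or.inl (rot_zpow_pred_apply ..))

include hσ hτ in
theorem existsUnique_fixed_reflTransGen [Finite α] (hσfree : ∀ z, σ z ≠ z) (hx : τ x = x) :
    ∃! y, y ≠ x ∧ τ y = y ∧ ReflTransGen (fun a b => b = σ a ∨ b = τ a) x y := by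
  have hn : 0 < (MulAction.period (rot hσ hτ) x : ℤ) := by
    exact_mod_cast MulAction.period_pos_of_orderOf_pos (orderOf_pos (rot hσ hτ)) x
  have hfixed (j : ℤ) : τ ((rot hσ hτ ^ j) x) = (rot hσ hτ ^ j) x ↔
      (MulAction.period (rot hσ hτ) x : ℤ) ∣ 2 * j := by
    rw [apply_rot_zpow_of_fixed hσ hτ hx, rot_zpow_apply_eq_iff, ← dvd_neg]; ring_nf
  have hne (j : ℤ) : (rot hσ hτ ^ j) x ≠ x ↔ ¬ (MulAction.period (rot hσ hτ) x : ℤ) ∣ j := by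
    simpa using (rot_zpow_apply_eq_iff hσ hτ j 0).not
  have hodd (j : ℤ) : ¬ (MulAction.period (rot hσ hτ) x : ℤ) ∣ 2 * j + 1 := by
    have := hσfree ((rot hσ hτ ^ j) x)
    rwa [apply_rot_zpow_of_fixed' hσ hτ hx, Ne, rot_zpow_apply_eq_iff, ← dvd_neg,
      show -(-j - 1 - j) = 2 * j + 1 by ring] at this
  have hreach (y : α) := reflTransGen_iff_exists_rot_zpow hσ hτ hx (y := y)
  have heq (i j : ℤ) := rot_zpow_apply_eq_iff hσ hτ (x := x) i j
  generalize (MulAction.period (rot hσ hτ) x : ℤ) = n at *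
  obtain ⟨m, rfl⟩ : ∃ m, n = 2 * m := by
    obtain ⟨k, hk | hk⟩ := Int.even_or_odd' n
    · exact ⟨k, hk⟩
    · exact absurd (hk ▸ dvd_refl _) (hodd k)
  refine ⟨(rot hσ hτ ^ m) x, ⟨(hne m).2 ?_, (hfixed m).2 ⟨1, by ring⟩, (hreach _).2 ⟨m, rfl⟩⟩, ?_⟩
  · exact fun h => by have := Int.le_of_dvd (by omega) h; omega
  rintro y ⟨hyx, hyτ, hxy⟩
  obtain ⟨j, rfl⟩ := (hreach _).1 hxy
  refine (heq j m).2 ?_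
  obtain ⟨a, ha⟩ := (hfixed j).1 hyτ
  have hj : j = m * a := by linarith
  obtain ⟨b, rfl | rfl⟩ := Int.even_or_odd' a
  · exact absurd ⟨b, by rw [hj]; ring⟩ ((hne j).1 hyx)
  · exact ⟨b, by rw [hj]; ring⟩

end Function.Involutive

section Diagram

variable {N : ℕ}

lemma diagPos_of_lt {a : Fin (2*N)} (ha : (a : ℕ) < N) : diagPos N a = a := if_pos ha

lemma diagPos_of_le {a : Fin (2*N)} (ha : N ≤ (a : ℕ)) : diagPos N a = 3*N - 1 - a :=
  if_neg (by omega)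

lemma diagPos_lt_iff (a : Fin (2*N)) : diagPos N a < N ↔ (a : ℕ) < N := by
  have := a.isLt; unfold diagPos; split <;> omega

lemma diagPos_injective : Injective (diagPos N) := by
  intro a b h
  have := a.isLt; have := b.isLt
  unfold diagPos at h; ext; split at h <;> split at h <;> omega

variable {m : Fin (2*N) → Fin (2*N)}

lemma IsDiagram.involutive (h : IsDiagram N m) : Involutive m := h.2.1

lemma IsDiagram.even_card_of_mapsTo (h : IsDiagram N m) {S : Finset (Fin (2*N))}
    (hS : ∀ q ∈ S, m q ∈ S) : Even #S :=
  even_card_of_involution m hS (fun q _ => h.1 q) (fun q _ => h.involutive q)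

lemma IsDiagram.diagPos_apply_mem_Ioo (h : IsDiagram N m) {p q : Fin (2*N)}
    (hq : diagPos N q ∈ Set.Ioo (diagPos N p) (diagPos N (m p))) :
    diagPos N (m q) ∈ Set.Ioo (diagPos N p) (diagPos N (m p)) := by
  obtain ⟨hpq, hqp⟩ := hq
  have hmq_p : diagPos N (m q) ≠ diagPos N p := fun e => by
    rw [← h.involutive q, diagPos_injective e] at hqp; omega
  have hmq_mp : diagPos N (m q) ≠ diagPos N (m p) := fun e => by
    rw [h.involutive.injective (diagPos_injective e)] at hpq; omega
  constructor
  · by_contra hlt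
    exact h.2.2 (m q) q p (m p) (by omega) hpq hqp (h.involutive q) rfl
  · by_contra hlt
    exact h.2.2 p (m p) q (m q) hpq hqp (by omega) rfl rfl

def below (S : Finset (Fin (2*N))) (p : Fin (2*N)) : ℕ :=
  #{q ∈ S | diagPos N q < diagPos N p}

lemma below_add_card_filter_gt {S : Finset (Fin (2*N))} {p : Fin (2*N)} (hp : p ∉ S) :
    below S p + #{q ∈ S | diagPos N p < diagPos N q} = #S := by
  rw [below, ← card_filter_add_card_filter_not (s := S) (fun q => diagPos N q < diagPos N p)]
  refine congrArg _ (congrArg card (filter_congr fun q hq => ?_))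
  have : diagPos N q ≠ diagPos N p := fun e => hp (diagPos_injective e ▸ hq)
  omega

/-- The points of `S` under the chord from `p` to `m p` are matched among themselves, so there is
an even number of them. -/
lemma IsDiagram.below_apply_mod_two (h : IsDiagram N m) {S : Finset (Fin (2*N))}
    (hS : ∀ q ∈ S, m q ∈ S) {p : Fin (2*N)} (hp : p ∉ S) :
    below S (m p) % 2 = below S p % 2 := by
  wlog hlt : diagPos N p < diagPos N (m p) generalizing p
  · have hne : diagPos N p ≠ diagPos N (m p) := fun e => h.1 p (diagPos_injective e).symm
    have hmp : m p ∉ S := fun hmp => hp (h.involutive p ▸ hS _ hmp)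
    have := this hmp (by rw [h.involutive p]; omega)
    rw [h.involutive p] at this
    exact this.symm
  set T := {q ∈ S | diagPos N p ≤ diagPos N q ∧ diagPos N q < diagPos N (m p)}
  have hsplit : below S (m p) = below S p + #T := by
    rw [below, below, ← card_union_of_disjoint (disjoint_filter.2 fun _ _ _ _ => by omega),
      ← filter_or]
    exact congrArg card (filter_congr fun _ _ => by omega)
  obtain ⟨k, hk⟩ : Even #T := h.even_card_of_mapsTo fun q hq => by
    obtain ⟨hqS, hpq, hqp⟩ := mem_filter.1 hq
    have hpq : diagPos N p < diagPos N q :=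
      lt_of_le_of_ne hpq fun e => hp (diagPos_injective e ▸ hqS)
    have := h.diagPos_apply_mem_Ioo ⟨hpq, hqp⟩
    exact mem_filter.2 ⟨hS q hqS, this.1.le, this.2⟩
  omega

/-- The points of `S1` before `q` are the bottom points and the interface points right of `q`;
those of `S2` before `r` are glued to the interface points left of `q`. -/
lemma below_add_below_of_glued {S1 S2 : Finset (Fin (2*N))}
    (hS : ∀ q r : Fin (2*N), (q : ℕ) = r + N → (q ∈ S1 ↔ r ∈ S2)) {q r : Fin (2*N)}
    (hqr : (q : ℕ) = r + N) (hq : q ∉ S1) : below S1 q + below S2 r = #S1 := by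
  have hr : (r : ℕ) < N := by omega
  have hbij : below S2 r = #{s ∈ S1 | N ≤ s.val ∧ s.val < q.val} := by
    rw [below, diagPos_of_lt hr]
    have hlt {t : Fin (2*N)} (ht : t ∈ S2.filter (diagPos N · < r)) : (t : ℕ) < N :=
      (diagPos_lt_iff t).1 (by have := (mem_filter.1 ht).2; omega)
    refine card_bij (fun t ht => ⟨t + N, by have := hlt ht; omega⟩) (fun t ht => ?_)
      (fun _ _ _ _ e => by simpa [Fin.ext_iff] using e) (fun s hs => ?_)
    · obtain ⟨htS, htr⟩ := mem_filter.1 ht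
      rw [diagPos_of_lt (hlt ht)] at htr
      exact mem_filter.2 ⟨(hS _ t rfl).2 htS, by simp, by simp; omega⟩
    · obtain ⟨hsS, hNs, hsq⟩ := mem_filter.1 hs
      refine ⟨⟨s - N, by omega⟩, mem_filter.2 ⟨(hS s _ (by simp; omega)).1 hsS, ?_⟩,
        by ext; simp; omega⟩
      rw [diagPos_of_lt (by simp; omega)]; simp; omega
  rw [hbij, below, card_filter, card_filter, ← sum_add_distrib, card_eq_sum_ones]
  refine sum_congr rfl fun s hs => ?_
  have hsq : (s : ℕ) ≠ q := fun e => hq (Fin.ext e ▸ hs)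
  have := s.isLt
  rw [diagPos_of_le (by omega : N ≤ (q : ℕ))]
  unfold diagPos
  split_ifs <;> omega

end Diagram

section Stack

variable {N : ℕ} {m1 m2 : Fin (2*N) → Fin (2*N)}

def stackMatch (m1 m2 : Fin (2*N) → Fin (2*N)) :
    Fin (2*N) ⊕ Fin (2*N) → Fin (2*N) ⊕ Fin (2*N) :=
  Sum.map m1 m2

def glue (N : ℕ) : Fin (2*N) ⊕ Fin (2*N) → Fin (2*N) ⊕ Fin (2*N)
  | .inl p => if h : N ≤ (p : ℕ) then .inr ⟨p - N, by omega⟩ else .inl p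
  | .inr p => if h : (p : ℕ) < N then .inl ⟨p + N, by omega⟩ else .inr p

/-- `layerStep` as the union of the graphs of two involutions; at the outer points `glue` only adds
loops. -/
def strandStep (m1 m2 : Fin (2*N) → Fin (2*N)) (z w : Fin (2*N) ⊕ Fin (2*N)) : Prop :=
  w = stackMatch m1 m2 z ∨ w = glue N z

lemma glue_inl_of_le {p : Fin (2*N)} (h : N ≤ (p : ℕ)) :
    glue N (.inl p) = .inr ⟨p - N, by omega⟩ := dif_pos h

lemma glue_inl_of_lt {p : Fin (2*N)} (h : (p : ℕ) < N) : glue N (.inl p) = .inl p :=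
  dif_neg (by omega)

lemma glue_inr_of_lt {p : Fin (2*N)} (h : (p : ℕ) < N) :
    glue N (.inr p) = .inl ⟨p + N, by omega⟩ := dif_pos h

lemma glue_inr_of_le {p : Fin (2*N)} (h : N ≤ (p : ℕ)) : glue N (.inr p) = .inr p :=
  dif_neg (by omega)

lemma glue_inl_of_eq_add {q r : Fin (2*N)} (h : (q : ℕ) = r + N) : glue N (.inl q) = .inr r := by
  rw [glue_inl_of_le (by omega), Sum.inr.injEq, Fin.ext_iff]; simp only; omega

lemma glue_involutive : Involutive (glue N) := by
  rintro (p | p)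
  · by_cases h : N ≤ (p : ℕ)
    · rw [glue_inl_of_le h, glue_inr_of_lt (by simp; omega)]; simp [Fin.ext_iff]; omega
    · rw [glue_inl_of_lt (by omega), glue_inl_of_lt (by omega)]
  · by_cases h : (p : ℕ) < N
    · rw [glue_inr_of_lt h, glue_inl_of_le (by simp)]; simp
    · rw [glue_inr_of_le (by omega), glue_inr_of_le (by omega)]

lemma outer_of_lt {c : Fin (2*N)} (hc : (c : ℕ) < N) : outer N c = .inl c := if_pos hc

lemma outer_of_le {c : Fin (2*N)} (hc : N ≤ (c : ℕ)) : outer N c = .inr c := if_neg (by omega)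

lemma outer_injective : Injective (outer N) := by
  intro a b h
  unfold outer at h
  split_ifs at h <;> simpa using h

lemma glue_eq_self_iff {z : Fin (2*N) ⊕ Fin (2*N)} :
    glue N z = z ↔ z ∈ Set.range (outer N) := by
  rcases z with p | p
  · by_cases h : N ≤ (p : ℕ)
    · simp [glue_inl_of_le h, outer, h, apply_ite (· = Sum.inl p)]
    · simp [glue_inl_of_lt (not_le.1 h), outer]
      exact ⟨p, if_pos (not_le.1 h)⟩
  · by_cases h : (p : ℕ) < N
    · simp [glue_inr_of_lt h, outer, apply_ite (· = Sum.inr p)]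
      omega
    · simp [glue_inr_of_le (not_lt.1 h), outer]
      exact ⟨p, if_neg h⟩

lemma stackMatch_involutive (h1 : IsDiagram N m1) (h2 : IsDiagram N m2) :
    Involutive (stackMatch m1 m2) := by
  rintro (p | p)
  · exact congrArg Sum.inl (h1.involutive p)
  · exact congrArg Sum.inr (h2.involutive p)

lemma stackMatch_ne (h1 : IsDiagram N m1) (h2 : IsDiagram N m2) (z : Fin (2*N) ⊕ Fin (2*N)) :
    stackMatch m1 m2 z ≠ z := by
  rcases z with p | p
  · exact fun e => h1.1 p (Sum.inl_injective e)
  · exact fun e => h2.1 p (Sum.inr_injective e)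

lemma strandStep_symm (h1 : IsDiagram N m1) (h2 : IsDiagram N m2)
    {z w : Fin (2*N) ⊕ Fin (2*N)} (h : strandStep m1 m2 z w) : strandStep m1 m2 w z := by
  rcases h with rfl | rfl
  · exact Or.inl (stackMatch_involutive h1 h2 z).symm
  · exact Or.inr (glue_involutive z).symm

lemma layerStep_stackMatch (z : Fin (2*N) ⊕ Fin (2*N)) :
    layerStep N m1 m2 z (stackMatch m1 m2 z) := by
  rcases z with p | p <;> exact Or.inl rfl

lemma layerStep_glue {z : Fin (2*N) ⊕ Fin (2*N)} (hz : glue N z ≠ z) :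
    layerStep N m1 m2 z (glue N z) := by
  rcases z with p | p
  · by_cases h : N ≤ (p : ℕ)
    · rw [glue_inl_of_le h]; show (p : ℕ) = p - N + N; omega
    · exact absurd (glue_inl_of_lt (not_le.1 h)) hz
  · by_cases h : (p : ℕ) < N
    · rw [glue_inr_of_lt h]; rfl
    · exact absurd (glue_inr_of_le (not_lt.1 h)) hz

lemma strandStep_of_layerStep (h1 : IsDiagram N m1) (h2 : IsDiagram N m2)
    {z w : Fin (2*N) ⊕ Fin (2*N)} (h : layerStep N m1 m2 z w) : strandStep m1 m2 z w := by
  rcases z with p | p <;> rcases w with q | q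
  · left; rcases h with rfl | rfl
    · rfl
    · simp [stackMatch, h1.involutive q]
  · right; change (p : ℕ) = q + N at h
    exact (glue_inl_of_eq_add h).symm
  · right; change (q : ℕ) = p + N at h
    rw [glue_inr_of_lt (by omega)]; simp [Fin.ext_iff]; omega
  · left; rcases h with rfl | rfl
    · rfl
    · simp [stackMatch, h2.involutive q]

lemma conn_iff_reflTransGen (h1 : IsDiagram N m1) (h2 : IsDiagram N m2)
    {z w : Fin (2*N) ⊕ Fin (2*N)} :
    Conn N m1 m2 z w ↔ ReflTransGen (strandStep m1 m2) z w := by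
  constructor
  · exact ReflTransGen.mono (fun _ _ => strandStep_of_layerStep h1 h2) _ _
  · intro h
    induction h with
    | refl => exact .refl
    | @tail y w _ hstep ih =>
      rcases hstep with rfl | rfl
      · exact ih.tail (layerStep_stackMatch y)
      · by_cases hy : glue N y = y
        · rwa [hy]
        · exact ih.tail (layerStep_glue hy)

lemma conn_symm (h1 : IsDiagram N m1) (h2 : IsDiagram N m2) {z w : Fin (2*N) ⊕ Fin (2*N)}
    (h : Conn N m1 m2 z w) : Conn N m1 m2 w z := by
  rw [conn_iff_reflTransGen h1 h2] at h ⊢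
  exact ReflTransGen.mono (fun _ _ => strandStep_symm h1 h2) _ _ (ReflTransGen.swap _ _ h)

lemma existsUnique_conn_outer (h1 : IsDiagram N m1) (h2 : IsDiagram N m2) (a : Fin (2*N)) :
    ∃! b, b ≠ a ∧ Conn N m1 m2 (outer N a) (outer N b) := by
  obtain ⟨y, ⟨hya, hyfix, hy⟩, huniq⟩ := Involutive.existsUnique_fixed_reflTransGen
    (stackMatch_involutive h1 h2) glue_involutive (stackMatch_ne h1 h2)
    (glue_eq_self_iff.2 ⟨a, rfl⟩)
  obtain ⟨b, rfl⟩ := glue_eq_self_iff.1 hyfix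
  refine ⟨b, ⟨fun e => hya (e ▸ rfl), (conn_iff_reflTransGen h1 h2).2 hy⟩, ?_⟩
  rintro b' ⟨hb'a, hb'⟩
  exact outer_injective <| huniq _ ⟨outer_injective.ne hb'a, glue_eq_self_iff.2 ⟨b', rfl⟩,
    (conn_iff_reflTransGen h1 h2).1 hb'⟩

lemma diagComp_spec (h1 : IsDiagram N m1) (h2 : IsDiagram N m2) (a : Fin (2*N)) :
    diagComp N m1 m2 a ≠ a ∧ Conn N m1 m2 (outer N a) (outer N (diagComp N m1 m2 a)) := by
  have hex := (existsUnique_conn_outer h1 h2 a).exists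
  simp only [diagComp, dif_pos hex]
  exact hex.choose_spec

lemma diagComp_eq_iff (h1 : IsDiagram N m1) (h2 : IsDiagram N m2) {a b : Fin (2*N)}
    (hba : b ≠ a) : diagComp N m1 m2 a = b ↔ Conn N m1 m2 (outer N a) (outer N b) :=
  ⟨fun h => h ▸ (diagComp_spec h1 h2 a).2,
    fun h => (existsUnique_conn_outer h1 h2 a).unique (diagComp_spec h1 h2 a) ⟨hba, h⟩⟩

lemma diagComp_involutive (h1 : IsDiagram N m1) (h2 : IsDiagram N m2) :
    Involutive (diagComp N m1 m2) := fun a =>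
  (diagComp_eq_iff h1 h2 (diagComp_spec h1 h2 a).1.symm).2
    (conn_symm h1 h2 (diagComp_spec h1 h2 a).2)

end Stack

section Side

variable {N : ℕ} {m1 m2 : Fin (2*N) → Fin (2*N)}

/-- Modulo 2, the number of chords of `P` in the layer of `z` separating `z` from the left edge of
that layer. -/
noncomputable def side (P : Finset (Fin (2*N) ⊕ Fin (2*N))) : Fin (2*N) ⊕ Fin (2*N) → ℕ :=
  Sum.elim (below (P.preimage Sum.inl Sum.inl_injective.injOn))
    (below (P.preimage Sum.inr Sum.inr_injective.injOn))

variable (h1 : IsDiagram N m1) (h2 : IsDiagram N m2) {P : Finset (Fin (2*N) ⊕ Fin (2*N))}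
  (hPm : ∀ z ∈ P, stackMatch m1 m2 z ∈ P) (hPg : ∀ z ∈ P, glue N z ∈ P)

include h1 h2 hPm hPg

lemma side_mod_two_eq_of_strandStep {z w : Fin (2*N) ⊕ Fin (2*N)} (hz : z ∉ P)
    (h : strandStep m1 m2 z w) : side P w % 2 = side P z % 2 := by
  have hglued (q r : Fin (2*N)) (hqr : (q : ℕ) = r + N) :
      q ∈ P.preimage Sum.inl Sum.inl_injective.injOn ↔
        r ∈ P.preimage Sum.inr Sum.inr_injective.injOn := by
    simp only [mem_preimage]
    rw [← glue_inl_of_eq_add hqr]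
    exact ⟨hPg _, fun h => glue_involutive (Sum.inl q) ▸ hPg _ h⟩
  have hcross (q r : Fin (2*N)) (hqr : (q : ℕ) = r + N) (hq : Sum.inl q ∉ P) :
      side P (.inr r) % 2 = side P (.inl q) % 2 := by
    have := below_add_below_of_glued hglued hqr (by simpa using hq)
    obtain ⟨k, hk⟩ := h1.even_card_of_mapsTo (S := P.preimage Sum.inl Sum.inl_injective.injOn)
      fun q hq => by simpa [stackMatch] using hPm _ (mem_preimage.1 hq)
    simp only [side, Sum.elim_inl, Sum.elim_inr]
    omega
  rcases h with rfl | rfl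
  · rcases z with p | p
    · exact h1.below_apply_mod_two
        (fun q hq => by simpa [stackMatch] using hPm _ (mem_preimage.1 hq)) (by simpa using hz)
    · exact h2.below_apply_mod_two
        (fun q hq => by simpa [stackMatch] using hPm _ (mem_preimage.1 hq)) (by simpa using hz)
  · rcases z with p | p
    · by_cases hp : N ≤ (p : ℕ)
      · exact glue_inl_of_le hp ▸ hcross p _ (by simp; omega) hz
      · rw [glue_inl_of_lt (not_le.1 hp)]
    · by_cases hp : (p : ℕ) < N
      · have hq : glue N (.inl ⟨p + N, by omega⟩) = .inr p := glue_inl_of_eq_add rfl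
        rw [glue_inr_of_lt hp]
        exact (hcross _ p rfl fun hmem => hz (hq ▸ hPg _ hmem)).symm
      · rw [glue_inr_of_le (not_lt.1 hp)]

lemma side_mod_two_eq_of_reflTransGen {z w : Fin (2*N) ⊕ Fin (2*N)} (hz : z ∉ P)
    (h : ReflTransGen (strandStep m1 m2) z w) : side P w % 2 = side P z % 2 := by
  suffices w ∉ P ∧ side P w % 2 = side P z % 2 from this.2
  induction h with
  | refl => exact ⟨hz, rfl⟩
  | @tail y w _ hstep ih =>
    refine ⟨fun hw => ih.1 ?_,
      (side_mod_two_eq_of_strandStep h1 h2 hPm hPg ih.1 hstep).trans ih.2⟩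
    rcases strandStep_symm h1 h2 hstep with rfl | rfl
    · exact hPm w hw
    · exact hPg w hw

omit h1 hPg in
lemma side_outer_mod_two {a b c : Fin (2*N)} (hab : a ≠ b)
    (hP : ∀ e, outer N e ∈ P ↔ e = a ∨ e = b) (hc : outer N c ∉ P) :
    side P (outer N c) % 2 =
      ((if diagPos N a < diagPos N c then 1 else 0) +
        (if diagPos N b < diagPos N c then 1 else 0)) % 2 := by
  by_cases hcN : (c : ℕ) < N
  · rw [outer_of_lt hcN]
    refine congrArg (· % 2) (card_filter_eq_ite_add_ite hab fun q hq => ?_)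
    have hqN : (q : ℕ) < N := (diagPos_lt_iff q).1 (by rw [diagPos_of_lt hcN] at hq; omega)
    rw [mem_preimage, ← outer_of_lt hqN, hP]
  · have hcN : N ≤ (c : ℕ) := by omega
    have hac := diagPos_injective.ne fun e : a = c => hc (e ▸ (hP a).2 (.inl rfl))
    have hbc := diagPos_injective.ne fun e : b = c => hc (e ▸ (hP b).2 (.inr rfl))
    rw [outer_of_le hcN] at hc ⊢
    have hsum := below_add_card_filter_gt (S := P.preimage Sum.inr Sum.inr_injective.injOn)
      (p := c) (by simpa using hc)
    rw [card_filter_eq_ite_add_ite hab fun q hq => ?_] at hsum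
    · obtain ⟨k, hk⟩ := h2.even_card_of_mapsTo (S := P.preimage Sum.inr Sum.inr_injective.injOn)
        fun q hq => by simpa [stackMatch] using hPm _ (mem_preimage.1 hq)
      change below _ c % 2 = _
      split_ifs at hsum ⊢ <;> omega
    · have hqN : N ≤ (q : ℕ) := by
        by_contra hlt
        have := (diagPos_lt_iff q).2 (by omega)
        have := (diagPos_lt_iff c).not.2 (by omega)
        omega
      rw [mem_preimage, ← outer_of_le hqN, hP]

end Side

lemma diagComp_noncrossing {N : ℕ} {m1 m2 : Fin (2*N) → Fin (2*N)} (h1 : IsDiagram N m1)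
    (h2 : IsDiagram N m2) (a b c d : Fin (2*N)) (hac : diagPos N a < diagPos N c)
    (hcb : diagPos N c < diagPos N b) (hbd : diagPos N b < diagPos N d)
    (hab : diagComp N m1 m2 a = b) (hcd : diagComp N m1 m2 c = d) : False := by
  classical
  let P : Finset (Fin (2*N) ⊕ Fin (2*N)) := {z | ReflTransGen (strandStep m1 m2) (outer N a) z}
  have hPm : ∀ z ∈ P, stackMatch m1 m2 z ∈ P := fun z hz => by
    simp only [P, mem_filter, mem_univ, true_and] at hz ⊢; exact hz.tail (.inl rfl)
  have hPg : ∀ z ∈ P, glue N z ∈ P := fun z hz => by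
    simp only [P, mem_filter, mem_univ, true_and] at hz ⊢; exact hz.tail (.inr rfl)
  have hP (e : Fin (2*N)) : outer N e ∈ P ↔ e = a ∨ e = b := by
    simp only [P, mem_filter, mem_univ, true_and, ← conn_iff_reflTransGen h1 h2]
    by_cases hea : e = a
    · subst hea; exact iff_of_true .refl (.inl rfl)
    · rw [← diagComp_eq_iff h1 h2 hea, hab]; tauto
  have hab' : a ≠ b := fun e => by rw [e] at hac; omega
  have hc : outer N c ∉ P := fun h => by
    rcases (hP c).1 h with e | e <;> rw [e] at hac hcb <;> omega
  have hd : outer N d ∉ P := fun h => by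
    rcases (hP d).1 h with e | e <;> rw [e] at hbd <;> omega
  have hside := side_mod_two_eq_of_reflTransGen h1 h2 hPm hPg hc
    ((conn_iff_reflTransGen h1 h2).1 (hcd ▸ (diagComp_spec h1 h2 c).2))
  rw [side_outer_mod_two h2 hPm hab' hP hc, side_outer_mod_two h2 hPm hab' hP hd] at hside
  simp only [if_pos hac, if_neg (show ¬ diagPos N b < diagPos N c by omega),
    if_pos (hac.trans (hcb.trans hbd)), if_pos hbd] at hside
  omega

theorem IsDiagram.diagComp {N : ℕ} {m1 m2 : Fin (2*N) → Fin (2*N)} (h1 : IsDiagram N m1)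
    (h2 : IsDiagram N m2) : IsDiagram N (diagComp N m1 m2) :=
  ⟨fun a => (diagComp_spec h1 h2 a).1, diagComp_involutive h1 h2, diagComp_noncrossing h1 h2⟩

/-- Composing (stacking) two planar diagrams on `N` strands yields a planar diagram:
there is a noncrossing perfect matching `m3` of the outer `2*N` boundary points which
matches `a` to `b` (for `a ≠ b`) exactly when a path through the stack of `m1` and
`m2` connects them. -/
theorem stmt_11 (N : ℕ) (m1 m2 : Fin (2*N) → Fin (2*N))
    (h1 : IsDiagram N m1) (h2 : IsDiagram N m2) :
    ∃ m3 : Fin (2*N) → Fin (2*N), IsDiagram N m3 ∧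
      ∀ a b : Fin (2*N), a ≠ b →
        (m3 a = b ↔ Conn N m1 m2 (outer N a) (outer N b)) :=
  ⟨diagComp N m1 m2, h1.diagComp h2, fun _ _ hab => diagComp_eq_iff h1 h2 hab.symm⟩
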